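/- arXiv:1911.00480 — 3 statements merged into one kernel-verified Lean document; each statement's English description precedes it below -/
import Mathlib

section
/- Let n ≥ 2 and let Q ∈ F_n with coefficients a_0 = 1, a_1, ..., a_n. Then for every j with 1 ≤ j ≤ n−1, one has a_j² ≥ a_{j−1} a_{j+1}. -/
/-!
Newton's inequalities. If `p` is real-rooted of degree at most `m + l + 2`, differentiate it `l`
times, reflect it in degree `m + 2` and differentiate `m` more times. Rolle's theorem and the
inversion of roots under reflection keep every stage real-rooted, so the resulting quadratic,
whose coefficients are factorial multiples of `p_l`, `p_{l+1}`, `p_{l+2}`, has a nonnegative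
discriminant. This gives `(m+2)(l+2) p_l p_{l+2} ≤ (m+1)(l+1) p_{l+1}²`, and in particular
`p_l p_{l+2} ≤ p_{l+1}²`.
-/

open Polynomial
open scoped Nat

namespace Polynomial

theorem Splits.reverse {K : Type*} [Field K] {p : K[X]} (hp : p.Splits) : p.reverse.Splits := by
  induction hp using Submonoid.closure_induction with
  | mem f hf =>
    rcases hf with ⟨a, rfl⟩ | ⟨a, rfl⟩
    · rw [reverse_C]; exact Splits.C a
    · exact Splits.of_natDegree_le_one ((reverse_natDegree_le _).trans (by simp))
  | one => rw [← C_1, reverse_C]; exact Splits.C 1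
  | mul f g _ _ hf hg => rw [reverse_mul_of_domain]; exact hf.mul hg

theorem reflect_eq_X_pow_mul_reverse {R : Type*} [Semiring R] {p : R[X]} {N : ℕ}
    (h : p.natDegree ≤ N) : p.reflect N = X ^ (N - p.natDegree) * p.reverse := by
  have := reflect_mul (1 : R[X]) p (F := N - p.natDegree) (by simp) le_rfl
  rwa [one_mul, Nat.sub_add_cancel h, reflect_one] at this

theorem Splits.reflect {K : Type*} [Field K] {p : K[X]} (hp : p.Splits) {N : ℕ}
    (h : p.natDegree ≤ N) : (p.reflect N).Splits := by
  rw [reflect_eq_X_pow_mul_reverse h]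
  exact (Splits.X.pow _).mul hp.reverse

theorem Splits.derivative {p : ℝ[X]} (hp : p.Splits) : (derivative p).Splits := by
  rw [splits_iff_card_roots] at hp ⊢
  refine le_antisymm (card_roots' _) ?_
  have := card_roots_le_derivative p
  have := natDegree_derivative_le p
  omega

theorem Splits.iterate_derivative {p : ℝ[X]} (hp : p.Splits) (k : ℕ) :
    (Polynomial.derivative^[k] p).Splits := by
  induction k with
  | zero => exact hp
  | succ k ih => rw [Function.iterate_succ_apply']; exact ih.derivative

theorem Splits.discrim_nonneg {K : Type*} [Field K] [LinearOrder K] [IsStrictOrderedRing K]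
    {p : K[X]} (hp : p.Splits) (h : p.natDegree ≤ 2) :
    0 ≤ discrim (p.coeff 2) (p.coeff 1) (p.coeff 0) := by
  by_cases h2 : p.coeff 2 = 0
  · simp [discrim, h2, sq_nonneg]
  have hdeg : p.natDegree = 2 := le_antisymm h (le_natDegree_of_ne_zero h2)
  obtain ⟨x, hx⟩ := hp.exists_eval_eq_zero fun h0 ↦ by
    simp [natDegree_eq_of_degree_eq_some h0] at hdeg
  rw [eval_eq_sum_range, hdeg, Finset.sum_range_succ, Finset.sum_range_succ,
    Finset.sum_range_one] at hx
  rw [discrim_eq_sq_of_quadratic_eq_zero (x := x) (by linear_combination hx)]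
  exact sq_nonneg _

theorem factorial_mul_coeff_iterate_derivative {R : Type*} [CommSemiring R] (p : R[X])
    (k i : ℕ) :
    (i ! : R) * (derivative^[k] p).coeff i = (i + k)! * p.coeff (i + k) := by
  rw [coeff_iterate_derivative, nsmul_eq_mul, ← mul_assoc, ← Nat.cast_mul,
    ← Nat.factorial_mul_descFactorial (Nat.le_add_left k i), Nat.add_sub_cancel]

theorem Splits.newton_coeff {p : ℝ[X]} (hp : p.Splits) {m l : ℕ}
    (hdeg : p.natDegree ≤ m + l + 2) :
    ((m + 2) * (l + 2) : ℝ) * (p.coeff l * p.coeff (l + 2)) ≤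
      (m + 1) * (l + 1) * p.coeff (l + 1) ^ 2 := by
  set T := Polynomial.derivative^[m] ((Polynomial.derivative^[l] p).reflect (m + 2))
  have hdeg_l : (Polynomial.derivative^[l] p).natDegree ≤ m + 2 :=
    (natDegree_iterate_derivative p l).trans (by omega)
  have hT : T.Splits := ((hp.iterate_derivative l).reflect hdeg_l).iterate_derivative m
  have hTdeg : T.natDegree ≤ 2 := by
    refine (natDegree_iterate_derivative _ m).trans ?_
    have := natDegree_reflect_le (N := m + 2) (p := Polynomial.derivative^[l] p)
    omega
  have hcoeff (i : ℕ) (hi : i ≤ 2) : (i ! * (2 - i)! : ℝ) * T.coeff i =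
      (i + m)! * (2 - i + l)! * p.coeff (2 - i + l) := by
    rw [mul_comm (i ! : ℝ), mul_assoc, factorial_mul_coeff_iterate_derivative,
      coeff_reflect, revAt_le (by omega), show m + 2 - (i + m) = 2 - i by omega, mul_left_comm,
      factorial_mul_coeff_iterate_derivative, mul_assoc]
  have h0 : 2 * T.coeff 0 = m ! * (l + 2)! * p.coeff (l + 2) := by
    simpa [add_comm] using hcoeff 0 (by norm_num)
  have h1 : T.coeff 1 = (m + 1)! * (l + 1)! * p.coeff (l + 1) := by
    simpa [add_comm] using hcoeff 1 (by norm_num)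
  have h2 : 2 * T.coeff 2 = (m + 2)! * l ! * p.coeff l := by
    simpa [add_comm] using hcoeff 2 (by norm_num)
  have hdisc := hT.discrim_nonneg hTdeg
  rw [discrim, h1, show 4 * T.coeff 2 * T.coeff 0 = 2 * T.coeff 2 * (2 * T.coeff 0) by ring,
    h0, h2] at hdisc
  push_cast [Nat.factorial_succ] at hdisc
  have hF : (0 : ℝ) < (m + 1) * (l + 1) * (m ! * l !) ^ 2 := by positivity
  refine le_of_mul_le_mul_left ?_ hF
  linear_combination hdisc

theorem Splits.coeff_mul_coeff_le_sq {p : ℝ[X]} (hp : p.Splits) (l : ℕ) :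
    p.coeff l * p.coeff (l + 2) ≤ p.coeff (l + 1) ^ 2 := by
  rcases le_or_gt (p.coeff l * p.coeff (l + 2)) 0 with hneg | hpos
  · exact hneg.trans (sq_nonneg _)
  have hnewton := hp.newton_coeff (m := p.natDegree) (l := l) (by omega)
  refine le_of_mul_le_mul_left (hnewton.trans' ?_) (by positivity)
  exact mul_le_mul_of_nonneg_right (by gcongr <;> norm_num) hpos.le

end Polynomial

theorem stmt_1_general (n : ℕ)
    (x : Fin n → ℤ)
    (Q : Polynomial ℤ) (hQ : Q = ∏ i, (X - C (x i))) :
    ∀ j : ℕ, 1 ≤ j → j ≤ n - 1 →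
      (Q.coeff (n - j)) ^ 2 ≥ Q.coeff (n - (j - 1)) * Q.coeff (n - (j + 1)) := by
  intro j hj1 hj2
  have hsplits : (Q.map (Int.castRingHom ℝ)).Splits := by
    rw [hQ, Polynomial.map_prod]
    exact Splits.prod fun i _ ↦ by simpa using Splits.X_sub_C (x i : ℝ)
  obtain ⟨l, hl⟩ : ∃ l, n - (j + 1) = l := ⟨_, rfl⟩
  rw [hl, show n - j = l + 1 by omega, show n - (j - 1) = l + 2 by omega, mul_comm]
  have hreal := hsplits.coeff_mul_coeff_le_sq l
  simp only [coeff_map, eq_intCast] at hreal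
  exact_mod_cast hreal

theorem stmt_1 (n : ℕ) (hn : 2 ≤ n)
    (x : Fin n → ℤ) (hx : ∀ i, x i ≠ 0)
    (Q : Polynomial ℤ) (hQ : Q = ∏ i, (X - C (x i))) :
    ∀ j : ℕ, 1 ≤ j → j ≤ n - 1 →
      (Q.coeff (n - j)) ^ 2 ≥ Q.coeff (n - (j - 1)) * Q.coeff (n - (j + 1)) :=
  stmt_1_general n x Q hQ
end

section
/- Let n ≥ 2 and let Q ∈ F_n with coefficients a_0 = 1, a_1, ..., a_n and roots x_1, ..., x_n ∈ ℤ \ {0}. Then max(|x_1|, ..., |x_n|) ≤ √2 · max(|a_1|, |a_2|). -/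
/-!
Write `A = ∑ xᵢ = -a₁` and `B = e₂(x) = a₂`. Newton's identity `∑ xᵢ² = A² - 2B` gives
`xⱼ² ≤ A² - 2B ≤ M² + 2M` with `M = max(|A|, |B|)`, which is at most `2M²` once `M ≥ 2`;
for `M ≤ 1` integrality of `xⱼ` finishes.
-/

open Polynomial

namespace Multiset

variable {R : Type*} [CommSemiring R]

theorem esymm_one (s : Multiset R) : s.esymm 1 = s.sum := by
  simp [esymm, powersetCard_one]

theorem esymm_succ_cons (a : R) (s : Multiset R) (k : ℕ) :
    (a ::ₘ s).esymm (k + 1) = a * s.esymm k + s.esymm (k + 1) := by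
  simp only [esymm, powersetCard_cons, map_add, sum_add, map_map, Function.comp_def, prod_cons,
    sum_map_mul_left, add_comm]

theorem sq_sum_eq_sum_map_sq_add_two_mul_esymm_two (s : Multiset R) :
    s.sum ^ 2 = (s.map (· ^ 2)).sum + 2 * s.esymm 2 := by
  induction s using Multiset.induction with
  | empty => simp [esymm, powersetCard_zero_right 1]
  | cons a s ih =>
    rw [sum_cons, map_cons, sum_cons, esymm_succ_cons, esymm_one, add_sq, ih]
    ring

end Multiset

theorem Int.sq_le_two_mul_sq_max_abs {y A B : ℤ} (h : y ^ 2 ≤ A ^ 2 - 2 * B) :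
    y ^ 2 ≤ 2 * max |A| |B| ^ 2 := by
  set M := max |A| |B|
  have hA : |A| ≤ M := le_max_left _ _
  have hB : -B ≤ M := (neg_le_abs B).trans (le_max_right _ _)
  have hM : y ^ 2 ≤ M ^ 2 + 2 * M := by
    nlinarith [sq_abs A, pow_le_pow_left₀ (abs_nonneg A) hA 2]
  rcases le_or_gt 2 M with h2 | h2
  · nlinarith
  · have hy : |y| < 2 := by nlinarith [sq_abs y, abs_nonneg A]
    have hM₀ : 0 ≤ M := (abs_nonneg A).trans hA
    interval_cases M <;> nlinarith [sq_abs y, abs_nonneg y]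

theorem Multiset.sq_le_two_mul_sq_max_abs_sum_esymm_two {s : Multiset ℤ} {x : ℤ} (hx : x ∈ s) :
    x ^ 2 ≤ 2 * max |s.sum| |s.esymm 2| ^ 2 := by
  have hx_sq : x ^ 2 ≤ (s.map (· ^ 2)).sum :=
    single_le_sum (by simp [sq_nonneg]) _ (mem_map_of_mem _ hx)
  have newton := sq_sum_eq_sum_map_sq_add_two_mul_esymm_two s
  exact Int.sq_le_two_mul_sq_max_abs (by linarith)

theorem stmt_5_general (n : ℕ) (hn : 2 ≤ n)
    (x : Fin n → ℤ)
    (Q : Polynomial ℤ) (hQ : Q = ∏ i, (X - C (x i))) :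
    ∀ i, (|x i| : ℝ) ≤
      Real.sqrt 2 * max |((Q.coeff (n - 1) : ℤ) : ℝ)| |((Q.coeff (n - 2) : ℤ) : ℝ)| := by
  intro i
  set s := Finset.univ.val.map x
  have hcard : s.card = n := by simp [s]
  have hQs : Q = (s.map fun t => X - C t).prod := by
    rw [hQ, Finset.prod_eq_multiset_prod, Multiset.map_map]; rfl
  have ha₁ : Q.coeff (n - 1) = -s.sum := by
    rw [hQs, Multiset.prod_X_sub_C_coeff _ (by omega), hcard, Nat.sub_sub_self (by omega),
      Multiset.esymm_one, pow_one, neg_one_mul]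
  have ha₂ : Q.coeff (n - 2) = s.esymm 2 := by
    rw [hQs, Multiset.prod_X_sub_C_coeff _ (by omega), hcard, Nat.sub_sub_self hn, neg_one_sq,
      one_mul]
  have hsq := Multiset.sq_le_two_mul_sq_max_abs_sum_esymm_two (Multiset.mem_map_of_mem x
    (Finset.mem_univ_val i))
  rw [ha₁, ha₂, ← Real.sqrt_sq (by positivity : (0 : ℝ) ≤ max _ _), ← Real.sqrt_mul zero_le_two]
  apply Real.abs_le_sqrt
  rw [Int.cast_neg, abs_neg, ← Int.cast_abs, ← Int.cast_abs, ← Int.cast_max]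
  exact_mod_cast hsq

theorem stmt_5 (n : ℕ) (hn : 2 ≤ n)
    (x : Fin n → ℤ) (hx : ∀ i, x i ≠ 0)
    (Q : Polynomial ℤ) (hQ : Q = ∏ i, (X - C (x i))) :
    ∀ i, (|x i| : ℝ) ≤
      Real.sqrt 2 * max |((Q.coeff (n - 1) : ℤ) : ℝ)| |((Q.coeff (n - 2) : ℤ) : ℝ)| :=
  stmt_5_general n hn x Q hQ
end

section
/- For every integer t ≥ 5, one has 15 · ∏_{j=2}^{t−3} (4 · 2^⌊(j+1)/2⌋ − 1) ≤ 2^(((t+1)² + 2(t+1) − 20)/4). -/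
/-!
Write `P t` for the left-hand side and `B t` for the right-hand side. Passing from `t` to `t + 2`
multiplies `P t` by the two factors `j = t - 2, t - 1`, whose product is below
`16 · 2 ^ (⌊(t - 1)/2⌋ + ⌊t/2⌋) = 2 ^ (t + 3)`, and multiplies `B t` by exactly `2 ^ (t + 3)`.
So the inequality propagates from `t` to `t + 2`, and it suffices to check `t = 5` (`105 ≤ 2 ^ 7`)
and `t = 6` (`1575 ≤ 2 ^ (43/4)`, i.e. `1575 ^ 4 ≤ 2 ^ 43`).
-/

open Finset

theorem Finset.prod_Icc_add_two {M : Type*} [CommMonoid M] (f : ℕ → M) {a n : ℕ}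
    (h : a ≤ n + 1) :
    ∏ j ∈ Icc a (n + 2), f j = (∏ j ∈ Icc a n, f j) * (f (n + 1) * f (n + 2)) := by
  rw [prod_Icc_succ_top (by omega), prod_Icc_succ_top h, mul_assoc]

def factor (j : ℕ) : ℕ := 4 * 2 ^ ((j + 1) / 2) - 1

theorem factor_mul_factor_succ_le (m : ℕ) : factor m * factor (m + 1) ≤ 2 ^ (m + 5) :=
  calc factor m * factor (m + 1)
      ≤ (4 * 2 ^ ((m + 1) / 2)) * (4 * 2 ^ ((m + 1 + 1) / 2)) :=
        Nat.mul_le_mul (Nat.sub_le _ _) (Nat.sub_le _ _)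
    _ = 2 ^ (m + 5) := by
        rw [show m + 5 = (m + 1) / 2 + (m + 1 + 1) / 2 + 4 by omega, pow_add, pow_add]
        ring

noncomputable def bound (t : ℕ) : ℝ :=
  (2 : ℝ) ^ ((((t : ℝ) + 1) ^ 2 + 2 * ((t : ℝ) + 1) - 20) / 4)

theorem bound_add_two (t : ℕ) : bound (t + 2) = bound t * 2 ^ (t + 3) := by
  rw [bound, bound, ← Real.rpow_natCast 2 (t + 3), ← Real.rpow_add two_pos]
  push_cast
  ring_nf

theorem bound_five : bound 5 = 2 ^ 7 := by
  rw [bound, ← Real.rpow_natCast]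
  norm_num

theorem le_bound_six : (1575 : ℝ) ≤ bound 6 := by
  have h_pow : (1575 : ℝ) ^ 4 ≤ bound 6 ^ 4 := by
    rw [bound, ← Real.rpow_natCast (2 ^ _) 4, ← Real.rpow_mul zero_le_two]
    norm_num
  exact le_of_pow_le_pow_left₀ four_ne_zero (Real.rpow_nonneg zero_le_two _) h_pow

theorem fifteen_mul_prod_factor_le_bound (n : ℕ) :
    ((15 * ∏ j ∈ Icc 2 (n + 2), factor j : ℕ) : ℝ) ≤ bound (n + 5) := by
  induction n using Nat.twoStepInduction with
  | zero =>
    rw [bound_five]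
    norm_num [factor]
  | one =>
    refine le_trans (le_of_eq ?_) le_bound_six
    rw [show Icc 2 (1 + 2) = {2, 3} by rfl]
    norm_num [factor]
  | more n ih _ =>
    rw [prod_Icc_add_two _ (by omega), ← mul_assoc, Nat.cast_mul, bound_add_two]
    gcongr
    · exact Real.rpow_nonneg zero_le_two _
    · exact_mod_cast factor_mul_factor_succ_le (n + 3)

theorem stmt_9 (t : ℕ) (ht : 5 ≤ t) :
    (15 : ℝ) * ∏ j ∈ Finset.Icc 2 (t - 3), ((4 * 2 ^ ((j + 1) / 2) - 1 : ℕ) : ℝ) ≤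
      (2 : ℝ) ^ (((((t : ℝ) + 1) ^ 2 + 2 * ((t : ℝ) + 1) - 20)) / 4) := by
  obtain ⟨n, rfl⟩ : ∃ n, t = n + 5 := ⟨t - 5, by omega⟩
  have h := fifteen_mul_prod_factor_le_bound n
  push_cast [factor] at h
  exact h
end
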